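/- arXiv:1906.00665 — 4 statements merged into one kernel-verified Lean document; each statement's English description precedes it below -/
import Mathlib

section
/- Let N be a positive integer and σ: {0,1}* -> {0,1,#}* be the N-uniform substitution σ(0) = # 0^{N-1}, σ(1) = # 1^{N-1}. Let w be an infinite binary word. If an abelian power u_0 u_1 ... u_{e-1} with exponent e ≥ N occurs as a factor of σ(w), then N divides |u_0|. -/
/-!
In `σ(w)` the letter `#` occurs exactly at the positions divisible by `N`, so any `N * m`
consecutive letters contain exactly `m` of them. The first `N` blocks of the abelian power are
abelian equivalent, hence contain the same number `c` of `#`s, and together they form `N * m`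
consecutive letters; thus `m = N * c`.
-/

/-- Abelian equivalence of words: each letter occurs equally often. -/
def AbEq {A : Type*} [DecidableEq A] (u v : List A) : Prop :=
  ∀ a : A, u.count a = v.count a

/-- `u` occurs as a (contiguous) factor of the infinite word `x`. -/
def OccursIn {A : Type*} (x : ℕ → A) (u : List A) : Prop :=
  ∃ i, u = (List.range u.length).map fun j => x (i + j)

/-- An abelian power of exponent `e` and period `m` occurs in `x`. -/
def IsAbPow {A : Type*} [DecidableEq A] (x : ℕ → A) (e m : ℕ) : Prop :=
  0 < e ∧ 0 < m ∧ ∃ u : ℕ → List A,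
    (∀ i < e, (u i).length = m) ∧
    (∀ i < e, AbEq (u i) (u 0)) ∧
    OccursIn x (((List.range e).map u).flatten)

/-- The `N`-uniform substitution `σ(0) = # 0^{N-1}`, `σ(1) = # 1^{N-1}`,
with `# = 2` in `Fin 3`. -/
def sigmaLetter (N : ℕ) (a : Fin 2) : List (Fin 3) :=
  (2 : Fin 3) :: List.replicate (N - 1) a.castSucc

/-- `σ(w)`, applying `σ` letterwise to the infinite binary word `w`. -/
def sigmaWord (N : ℕ) (w : ℕ → Fin 2) (n : ℕ) : Fin 3 :=
  (sigmaLetter N (w (n / N))).getD (n % N) 0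

theorem Nat.count_dvd_add_mul {N : ℕ} (hN : 0 < N) (p m : ℕ) :
    Nat.count (fun k => N ∣ p + k) (N * m) = m := by
  have hshift := Nat.count_add (N ∣ ·) p (N * m)
  have hperiod := Nat.count_add' (N ∣ ·) p (N * m)
  have hmult : Nat.count (N ∣ ·) (N * m) = m := by
    simpa [Nat.modEq_zero_iff_dvd, Nat.mul_div_cancel_left m hN] using
      Nat.count_modEq_card (N * m) hN 0
  simp only [Nat.dvd_add_left (Nat.dvd_mul_right N m)] at hperiod
  omega

section Factors

variable {A : Type*} (x : ℕ → A)

def factorAt (p L : ℕ) : List A :=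
  (List.range L).map fun j => x (p + j)

theorem factorAt_add (p L L' : ℕ) :
    factorAt x p (L + L') = factorAt x p L ++ factorAt x (p + L) L' := by
  simp [factorAt, List.range_add, add_assoc]

@[simp]
theorem length_factorAt (p L : ℕ) : (factorAt x p L).length = L := by
  simp [factorAt]

theorem count_factorAt [DecidableEq A] (a : A) (p L : ℕ) :
    (factorAt x p L).count a = Nat.count (fun j => x (p + j) = a) L := by
  induction L with
  | zero => simp [factorAt]
  | succ L ih =>
    rw [factorAt_add, List.count_append, ih, Nat.count_succ]
    simp [factorAt, List.count_singleton]

theorem count_factorAt_mul [DecidableEq A] {a : A} {i m n c : ℕ}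
    (hblocks : ∀ k < n, (factorAt x (i + k * m) m).count a = c) :
    (factorAt x i (n * m)).count a = n * c := by
  induction n with
  | zero => simp [factorAt]
  | succ n ih =>
    rw [Nat.succ_mul, factorAt_add, List.count_append, ih fun k hk => hblocks k (by omega),
      hblocks n (by omega), Nat.succ_mul]

end Factors

theorem length_flatten_map_range {A : Type*} {u : ℕ → List A} {e m : ℕ}
    (hlen : ∀ k < e, (u k).length = m) :
    ((List.range e).map u).flatten.length = e * m := by
  induction e with
  | zero => simp
  | succ e ih =>
    rw [List.range_succ, List.map_append, List.flatten_append, List.length_append,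
      ih fun k hk => hlen k (by omega)]
    simp [hlen e (by omega), Nat.succ_mul]

theorem eq_factorAt_of_flatten_eq {A : Type*} {x : ℕ → A} {u : ℕ → List A} {e m i : ℕ}
    (hlen : ∀ k < e, (u k).length = m)
    (hflat : ((List.range e).map u).flatten = factorAt x i (e * m)) :
    ∀ k < e, u k = factorAt x (i + k * m) m := by
  induction e with
  | zero => simp
  | succ e ih =>
    have hlen' : ∀ k < e, (u k).length = m := fun k hk => hlen k (by omega)
    rw [List.range_succ, List.map_append, List.flatten_append, Nat.succ_mul, factorAt_add]
      at hflat
    obtain ⟨hinit, hlast⟩ := List.append_inj (by simpa using hflat)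
      (by rw [length_flatten_map_range hlen', length_factorAt])
    intro k hk
    rcases Nat.lt_succ_iff_lt_or_eq.mp hk with hk | rfl
    · exact ih hlen' hinit k hk
    · exact hlast

theorem IsAbPow.exists_abEq_factorAt {A : Type*} [DecidableEq A] {x : ℕ → A} {e m : ℕ}
    (h : IsAbPow x e m) : ∃ i, ∀ k < e, AbEq (factorAt x (i + k * m) m) (factorAt x i m) := by
  obtain ⟨he, -, u, hlen, hab, i, hocc⟩ := h
  rw [length_flatten_map_range hlen] at hocc
  have hblocks := eq_factorAt_of_flatten_eq hlen hocc
  refine ⟨i, fun k hk => ?_⟩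
  have hfirst := hblocks 0 he
  rw [zero_mul, add_zero] at hfirst
  rw [← hblocks k hk, ← hfirst]
  exact hab k hk

theorem sigmaWord_eq_two_iff (N : ℕ) (w : ℕ → Fin 2) (n : ℕ) :
    sigmaWord N w n = 2 ↔ N ∣ n := by
  rw [Nat.dvd_iff_mod_eq_zero, sigmaWord, sigmaLetter]
  cases n % N with
  | zero => simp
  | succ r =>
    rw [List.getD_cons_succ, List.getD_eq_getElem?_getD, List.getElem?_replicate]
    have hletter := (w (n / N)).isLt
    split_ifs <;> simp [Fin.ext_iff, hletter.ne]

theorem count_two_factorAt_sigmaWord {N : ℕ} (hN : 0 < N) (w : ℕ → Fin 2) (p m : ℕ) :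
    (factorAt (sigmaWord N w) p (N * m)).count 2 = m := by
  simp only [count_factorAt, sigmaWord_eq_two_iff]
  exact Nat.count_dvd_add_mul hN p m

/-- If an abelian power of exponent `e ≥ N` and period `m` occurs in `σ(w)`,
then `N` divides `m`. -/
theorem period_divisible_of_abelian_power_in_sigma
    (N : ℕ) (hN : 0 < N) (w : ℕ → Fin 2) (e m : ℕ)
    (he : N ≤ e) (h : IsAbPow (sigmaWord N w) e m) :
    N ∣ m := by
  obtain ⟨i, hab⟩ := h.exists_abEq_factorAt
  have hcount := count_factorAt_mul (sigmaWord N w) (n := N) fun k hk => hab k (by omega) 2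
  rw [count_two_factorAt_sigmaWord hN] at hcount
  exact Dvd.intro _ hcount.symm
end

section
/- Let N be an even positive integer and σ: {0,1}* -> {0,1,#}* be defined by σ(0) = # 0^{N-1}, σ(1) = # 1^{N-1}. Let w be an infinite binary word. If an abelian power u_0 ... u_{e-1} with e ≥ N occurs in σ(w), then w contains an abelian power v_0 ... v_{e-1} of exponent e with |v_0| = |u_0| / N. -/
section ApxAux

def apxCnt {A : Type*} [DecidableEq A] (f : ℕ → A) (c : A) (a n : ℕ) : ℕ :=
  ((List.range n).map fun t => f (a + t)).count c

lemma apxCnt_zero {A : Type*} [DecidableEq A] (f : ℕ → A) (c : A) (a : ℕ) :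
    apxCnt f c a 0 = 0 := by simp [apxCnt]

lemma apxCnt_one {A : Type*} [DecidableEq A] (f : ℕ → A) (c : A) (a : ℕ) :
    apxCnt f c a 1 = if f a = c then 1 else 0 := by
  have h1 : List.range 1 = [0] := rfl
  simp only [apxCnt, h1, List.map_cons, List.map_nil, Nat.add_zero]
  by_cases h : f a = c <;> simp [h, List.count_cons]

lemma apxCnt_add {A : Type*} [DecidableEq A] (f : ℕ → A) (c : A) (a n1 n2 : ℕ) :
    apxCnt f c a (n1 + n2) = apxCnt f c a n1 + apxCnt f c (a + n1) n2 := by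
  unfold apxCnt
  rw [List.range_add, List.map_append, List.count_append, List.map_map]
  congr 2
  apply List.map_congr_left
  intro t _
  show f (a + (n1 + t)) = f (a + n1 + t)
  exact congrArg f (by omega)

lemma apxCnt_const {A : Type*} [DecidableEq A] (f : ℕ → A) (c : A) (a n : ℕ) (v : A)
    (h : ∀ t < n, f (a + t) = v) : apxCnt f c a n = if v = c then n else 0 := by
  unfold apxCnt
  have hrep : (List.range n).map (fun t => f (a + t)) = List.replicate n v := by
    apply List.eq_replicate_iff.mpr
    refine ⟨by simp, ?_⟩
    intro b hb
    simp only [List.mem_map, List.mem_range] at hb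
    obtain ⟨t, ht, rfl⟩ := hb
    exact h t ht
  rw [hrep, List.count_replicate]
  simp [beq_iff_eq]

lemma apxFlattenLen {A : Type*} (e m : ℕ) (u : ℕ → List A) (h : ∀ j < e, (u j).length = m) :
    (((List.range e).map u).flatten).length = e * m := by
  rw [List.length_flatten, List.map_map]
  have hrep : (List.range e).map (List.length ∘ u) = List.replicate e m := by
    apply List.eq_replicate_iff.mpr
    refine ⟨by simp, ?_⟩
    intro b hb
    simp only [List.mem_map, List.mem_range, Function.comp] at hb
    obtain ⟨j, hj, rfl⟩ := hb
    exact h j hj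
  rw [hrep, List.sum_replicate, smul_eq_mul]

lemma apxBlocks {A : Type*} (f : ℕ → A) :
    ∀ (e : ℕ) (u : ℕ → List A) (m i : ℕ), (∀ j < e, (u j).length = m) →
      ((List.range e).map u).flatten = (List.range (e * m)).map (fun t => f (i + t)) →
      ∀ j < e, u j = (List.range m).map fun t => f (i + j * m + t) := by
  intro e
  induction e with
  | zero => intro u m i _ _ j hj; omega
  | succ e ih =>
    intro u m i hlen hflat j hj
    rw [List.range_succ, List.map_append, List.flatten_append] at hflat
    have hsplit : (List.range ((e + 1) * m)).map (fun t => f (i + t)) =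
        (List.range (e * m)).map (fun t => f (i + t)) ++
          (List.range m).map (fun t => f (i + e * m + t)) := by
      rw [show (e + 1) * m = e * m + m by ring, List.range_add, List.map_append, List.map_map]
      congr 1
      apply List.map_congr_left
      intro t _
      show f (i + (e * m + t)) = f (i + e * m + t)
      exact congrArg f (by omega)
    rw [hsplit] at hflat
    have hl1 : (((List.range e).map u).flatten).length = e * m :=
      apxFlattenLen e m u (fun j hj => hlen j (by omega))
    have hl2 : ((List.range (e * m)).map (fun t => f (i + t))).length = e * m := by simp
    obtain ⟨h1, h2⟩ := List.append_inj hflat (by rw [hl1, hl2])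
    rcases Nat.lt_succ_iff_lt_or_eq.mp hj with h | rfl
    · exact ih u m i (fun j hj => hlen j (by omega)) h1 j h
    · simpa using h2

lemma apxBlocks' {A : Type*} (f : ℕ → A) (k : ℕ) :
    ∀ (e p : ℕ),
      ((List.range e).map fun j => (List.range k).map fun t => f (p + j * k + t)).flatten
        = (List.range (e * k)).map fun t => f (p + t) := by
  intro e
  induction e with
  | zero => intro p; simp
  | succ e ih =>
    intro p
    rw [List.range_succ, List.map_append, List.flatten_append, ih]
    rw [show (e + 1) * k = e * k + k by ring, List.range_add, List.map_append, List.map_map]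
    congr 1
    simp only [List.map_cons, List.map_nil, List.flatten_cons, List.flatten_nil,
      List.append_nil]
    apply List.map_congr_left
    intro t _
    show f (p + e * k + t) = f (p + (e * k + t))
    exact congrArg f (by omega)

lemma apxCount01 (l : List (Fin 2)) : l.count 0 + l.count 1 = l.length := by
  induction l with
  | nil => rfl
  | cons hd tl ih =>
    rw [List.count_cons, List.count_cons, List.length_cons]
    fin_cases hd <;> simp <;> omega

lemma apxKey (n d D D' Δ : ℤ) (hn1 : 0 < n) (hodd : Odd n) (hd0 : 0 ≤ d) (hdn : d < n)
    (hΔl : -2 ≤ Δ) (hΔr : Δ ≤ 2) (heq : n * (D - D') = d * Δ) : D = D' := by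
  obtain ⟨t, ht⟩ := hodd
  have h1 : n * (D - D') < n * 2 := by nlinarith [mul_nonneg hd0 (by linarith : (0:ℤ) ≤ 2 - Δ)]
  have h2 : n * (-2) < n * (D - D') := by nlinarith [mul_nonneg hd0 (by linarith : (0:ℤ) ≤ Δ + 2)]
  have h3 : D - D' < 2 := lt_of_mul_lt_mul_left h1 hn1.le
  have h4 : -2 < D - D' := lt_of_mul_lt_mul_left h2 hn1.le
  have h5 : D - D' = -1 ∨ D - D' = 0 ∨ D - D' = 1 := by omega
  rcases h5 with h | h | h
  · rw [h] at heq; interval_cases Δ <;> omega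
  · omega
  · rw [h] at heq; interval_cases Δ <;> omega

lemma apxEndgame (N s C C' z0 z1 z0' z1' : ℕ) (hNe : Even N) (hs1 : 1 ≤ s) (hsN : s < N)
    (hz0 : z0 ≤ 1) (hz1 : z1 ≤ 1) (hz0' : z0' ≤ 1) (hz1' : z1' ≤ 1)
    (hE : (N - s) * z0 + (N - 1) * C + (s - 1) * z1
        = (N - s) * z0' + (N - 1) * C' + (s - 1) * z1') :
    z0 + C = z0' + C' := by
  have hN1 : 1 ≤ N := by omega
  zify [hs1, hsN.le, hN1] at hE
  obtain ⟨t, ht⟩ := hNe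
  have hNt : (N : ℤ) = (t : ℤ) + (t : ℤ) := by exact_mod_cast ht
  have hN2 : 2 ≤ N := by omega
  have hodd : Odd ((N : ℤ) - 1) := ⟨(t : ℤ) - 1, by omega⟩
  have hkey := apxKey ((N : ℤ) - 1) ((s : ℤ) - 1) ((z0 : ℤ) + C) ((z0' : ℤ) + C')
    (((z1' : ℤ) - z1) - ((z0' : ℤ) - z0))
    (by omega) hodd (by omega) (by omega) (by omega) (by omega)
    (by linear_combination hE)
  exact_mod_cast hkey
end ApxAux
section ApxSigma

variable (N : ℕ) (w : ℕ → Fin 2)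

lemma apxSigmaAt0 (q : ℕ) : sigmaWord N w (q * N) = 2 := by
  unfold sigmaWord sigmaLetter
  rw [Nat.mul_mod_left]
  rfl

lemma apxSigmaAt (hN : 0 < N) (q r : ℕ) (hr1 : 1 ≤ r) (hrN : r < N) :
    sigmaWord N w (q * N + r) = (w q).castSucc := by
  unfold sigmaWord sigmaLetter
  have h1 : (q * N + r) % N = r := by
    rw [mul_comm q N, Nat.mul_add_mod]; exact Nat.mod_eq_of_lt hrN
  have h2 : (q * N + r) / N = q := by
    rw [mul_comm, Nat.mul_add_div hN, Nat.div_eq_of_lt hrN, add_zero]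
  rw [h1, h2]
  obtain ⟨r', rfl⟩ : ∃ r', r = r' + 1 := ⟨r - 1, by omega⟩
  rw [List.getD_cons_succ]
  rw [List.getD_eq_getElem?_getD, List.getElem?_replicate]
  rw [if_pos (by omega)]
  rfl

lemma apxCntTail (hN : 0 < N) (c : Fin 3) (q s : ℕ) (hs1 : 1 ≤ s) (hsN : s ≤ N) :
    apxCnt (sigmaWord N w) c (q * N + s) (N - s)
      = (N - s) * (if (w q).castSucc = c then 1 else 0) := by
  have hconst := apxCnt_const (sigmaWord N w) c (q * N + s) (N - s) ((w q).castSucc)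
    (fun t ht => by
      have harr : q * N + s + t = q * N + (s + t) := by ring
      rw [harr, apxSigmaAt N w hN q (s + t) (by omega) (by omega)])
  rw [hconst]
  by_cases hvc : (w q).castSucc = c <;> simp [hvc]

lemma apxCntHead (hN : 0 < N) (c : Fin 3) (q s : ℕ) (hs1 : 1 ≤ s) (hsN : s ≤ N) :
    apxCnt (sigmaWord N w) c (q * N) s
      = (if (2 : Fin 3) = c then 1 else 0)
        + (s - 1) * (if (w q).castSucc = c then 1 else 0) := by
  obtain ⟨s', rfl⟩ : ∃ s', s = s' + 1 := ⟨s - 1, by omega⟩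
  simp only [Nat.add_sub_cancel]
  rw [show s' + 1 = 1 + s' by ring, apxCnt_add, apxCnt_one, apxSigmaAt0 N w q]
  congr 1
  have hconst := apxCnt_const (sigmaWord N w) c (q * N + 1) s' ((w q).castSucc)
    (fun t ht => by
      have harr : q * N + 1 + t = q * N + (1 + t) := by ring
      rw [harr, apxSigmaAt N w hN q (1 + t) (by omega) (by omega)])
  rw [hconst]
  by_cases hvc : (w q).castSucc = c <;> simp [hvc]

lemma apxCntCast (a n : ℕ) :
    apxCnt (fun n => (w n).castSucc) (0 : Fin 3) a n = apxCnt w 0 a n := by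
  unfold apxCnt
  have hmm : (List.range n).map (fun t => (w (a + t)).castSucc)
      = ((List.range n).map fun t => w (a + t)).map Fin.castSucc := by
    rw [List.map_map]; rfl
  rw [hmm, show (0 : Fin 3) = Fin.castSucc (0 : Fin 2) from rfl,
    List.count_map_of_injective _ _ (Fin.castSucc_injective _)]

lemma apxCntFullMul (hN : 0 < N) (c : Fin 3) (q : ℕ) : ∀ t : ℕ,
    apxCnt (sigmaWord N w) c (q * N) (t * N)
      = t * (if (2 : Fin 3) = c then 1 else 0)
        + (N - 1) * apxCnt (fun n => (w n).castSucc) c q t := by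
  intro t
  induction t with
  | zero => simp [apxCnt]
  | succ t ih =>
    have h1 : apxCnt (sigmaWord N w) c (q * N) ((t + 1) * N)
        = apxCnt (sigmaWord N w) c (q * N) (t * N)
          + apxCnt (sigmaWord N w) c (q * N + t * N) N := by
      rw [← apxCnt_add]; congr 1; ring
    rw [h1, ih, show q * N + t * N = (q + t) * N by ring,
      apxCntHead N w hN c (q + t) N (by omega) le_rfl]
    have h2 : apxCnt (fun n => (w n).castSucc) c q (t + 1)
        = apxCnt (fun n => (w n).castSucc) c q t
          + (if (w (q + t)).castSucc = c then 1 else 0) := by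
      rw [apxCnt_add, apxCnt_one]
    rw [h2]
    ring

lemma apxCnt2Window (hN : 0 < N) (a : ℕ) : apxCnt (sigmaWord N w) 2 a N = 1 := by
  have hcs : ∀ b : Fin 2, (if b.castSucc = (2 : Fin 3) then (1:ℕ) else 0) = 0 := by decide
  have hd := Nat.div_add_mod a N
  set q := a / N
  set s := a % N
  have hsN : s < N := Nat.mod_lt _ hN
  have ha : a = q * N + s := by rw [mul_comm]; omega
  by_cases hs0 : s = 0
  · rw [ha, hs0, add_zero, apxCntHead N w hN 2 q N (by omega) le_rfl, hcs]
    simp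
  · have h1 : apxCnt (sigmaWord N w) 2 a N
        = apxCnt (sigmaWord N w) 2 a (N - s) + apxCnt (sigmaWord N w) 2 (a + (N - s)) s := by
      rw [← apxCnt_add]; congr 1; omega
    have h2 : a + (N - s) = (q + 1) * N := by
      have hq : (q + 1) * N = q * N + N := by ring
      omega
    rw [h1, h2, ha, apxCntTail N w hN 2 q s (by omega) hsN.le,
      apxCntHead N w hN 2 (q + 1) s (by omega) hsN.le, hcs, hcs]
    simp

lemma apxCnt2Mul (hN : 0 < N) (a : ℕ) : ∀ t : ℕ, apxCnt (sigmaWord N w) 2 a (t * N) = t := by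
  intro t
  induction t with
  | zero => simp [apxCnt]
  | succ t ih =>
    have h1 : apxCnt (sigmaWord N w) 2 a ((t + 1) * N)
        = apxCnt (sigmaWord N w) 2 a (t * N) + apxCnt (sigmaWord N w) 2 (a + t * N) N := by
      rw [← apxCnt_add]; congr 1; ring
    rw [h1, ih, apxCnt2Window N w hN]

end ApxSigma
section ApxBlockCnt

variable (N : ℕ) (w : ℕ → Fin 2)

lemma apxInd0 : ∀ b : Fin 2,
    ((if b.castSucc = (0 : Fin 3) then (1:ℕ) else 0) = if b = 0 then 1 else 0) := by decide

lemma apxCnt0Full (hN : 0 < N) (P k : ℕ) :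
    apxCnt (sigmaWord N w) 0 (P * N) (N * k) = (N - 1) * apxCnt w 0 P k := by
  rw [mul_comm N k, apxCntFullMul N w hN 0 P k, apxCntCast w]
  norm_num
  exact fun h => absurd h (by decide)

lemma apxCnt0Block (hN : 0 < N) (k : ℕ) (hk : 0 < k) (s : ℕ) (hs1 : 1 ≤ s) (hsN : s < N)
    (P : ℕ) :
    apxCnt (sigmaWord N w) 0 (P * N + s) (N * k)
      = (N - s) * apxCnt w 0 P 1 + (N - 1) * apxCnt w 0 (P + 1) (k - 1)
        + (s - 1) * apxCnt w 0 (P + k) 1 := by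
  obtain ⟨k', rfl⟩ : ∃ k', k = k' + 1 := ⟨k - 1, by omega⟩
  simp only [Nat.add_sub_cancel]
  have e1 : N * (k' + 1) = (N - s) + (k' * N + s) := by
    have h0 : N * (k' + 1) = k' * N + N := by ring
    rw [h0]
    generalize k' * N = M
    omega
  rw [e1, apxCnt_add]
  have e2 : P * N + s + (N - s) = (P + 1) * N := by
    have h0 : (P + 1) * N = P * N + N := by ring
    generalize hP : P * N = M at *
    omega
  rw [e2, apxCnt_add, show (P + 1) * N + k' * N = (P + 1 + k') * N by ring]
  rw [apxCntTail N w hN 0 P s hs1 hsN.le]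
  rw [apxCntFullMul N w hN 0 (P + 1) k', apxCntCast w]
  rw [apxCntHead N w hN 0 (P + 1 + k') s hs1 hsN.le]
  rw [apxInd0, apxInd0, show P + 1 + k' = P + (k' + 1) by ring]
  rw [apxCnt_one, apxCnt_one]
  have hne : (2 : Fin 3) ≠ 0 := by decide
  simp only [if_neg hne, Nat.mul_zero, Nat.zero_add, Nat.add_zero, mul_ite, mul_one, mul_zero]
  ring

end ApxBlockCnt
/-- For even `N`: if an abelian power of exponent `e ≥ N` and period `m` occurs
in `σ(w)`, then `w` contains an abelian power of exponent `e` and period `m / N`. -/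
theorem abelian_power_in_preimage
    (N : ℕ) (hN : 0 < N) (hNe : Even N) (w : ℕ → Fin 2) (e m : ℕ)
    (he : N ≤ e) (h : IsAbPow (sigmaWord N w) e m) :
    IsAbPow w e (m / N) := by
  obtain ⟨he0, hm0, u, hlen, habeq, i, hocc⟩ := h
  have hN2 : 2 ≤ N := by
    obtain ⟨t, ht⟩ := hNe; omega
  -- each block of the abelian power is an explicit segment of σ(w)
  have hflatlen : (((List.range e).map u).flatten).length = e * m := apxFlattenLen e m u hlen
  rw [hflatlen] at hocc
  have useg := apxBlocks (sigmaWord N w) e u m i hlen hocc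
  have hcnt : ∀ c : Fin 3, ∀ j < e,
      apxCnt (sigmaWord N w) c (i + j * m) m = apxCnt (sigmaWord N w) c i m := by
    intro c j hj
    have h1 := habeq j hj c
    rw [useg j hj, useg 0 he0] at h1
    simp only [Nat.zero_mul, Nat.add_zero] at h1
    exact h1
  -- Step A: N divides m
  have hsum : ∀ t ≤ N, apxCnt (sigmaWord N w) 2 i (t * m) = t * apxCnt (sigmaWord N w) 2 i m := by
    intro t
    induction t with
    | zero => intro _; simp [apxCnt]
    | succ t ih =>
      intro ht
      have h1 : apxCnt (sigmaWord N w) 2 i ((t + 1) * m)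
          = apxCnt (sigmaWord N w) 2 i (t * m) + apxCnt (sigmaWord N w) 2 (i + t * m) m := by
        rw [← apxCnt_add]; congr 1; ring
      rw [h1, ih (by omega), hcnt 2 t (by omega)]; ring
  have hmN : apxCnt (sigmaWord N w) 2 i (N * m) = m := by
    rw [mul_comm]; exact apxCnt2Mul N w hN i m
  set k := apxCnt (sigmaWord N w) 2 i m with hkdef
  have hm : m = N * k := by
    rw [← hmN, hsum N le_rfl]
  have hk1 : 0 < k := by
    rcases Nat.eq_zero_or_pos k with h0 | h0
    · rw [h0, mul_zero] at hm; omega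
    · exact h0
  have hmdiv : m / N = k := by rw [hm]; exact Nat.mul_div_cancel_left k hN
  -- addresses
  have hd := Nat.div_add_mod i N
  set s := i % N with hsdef
  set p := i / N with hpdef
  have hsN : s < N := Nat.mod_lt _ hN
  have hip : i = p * N + s := by rw [mul_comm]; omega
  have haddr : ∀ j : ℕ, i + j * m = (p + j * k) * N + s := by
    intro j; rw [hm, hip]; ring
  -- Step B: counts of 0 in the w-blocks agree
  have hD : ∀ j < e, apxCnt w 0 (p + j * k) k = apxCnt w 0 p k := by
    intro j hj
    have h1 := hcnt 0 j hj
    rw [haddr j, hip, hm] at h1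
    rcases Nat.eq_zero_or_pos s with hs0 | hs1
    · rw [hs0, add_zero, add_zero] at h1
      rw [apxCnt0Full N w hN (p + j * k) k, apxCnt0Full N w hN p k] at h1
      exact Nat.eq_of_mul_eq_mul_left (by omega) h1
    · rw [apxCnt0Block N w hN k hk1 s hs1 hsN (p + j * k),
        apxCnt0Block N w hN k hk1 s hs1 hsN p] at h1
      have hz : ∀ Q : ℕ, apxCnt w 0 Q 1 ≤ 1 := by
        intro Q; rw [apxCnt_one]; split <;> omega
      have h2 := apxEndgame N s _ _ _ _ _ _ hNe hs1 hsN (hz _) (hz _) (hz _) (hz _) h1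
      have hsplit : ∀ Q : ℕ, apxCnt w 0 Q k = apxCnt w 0 Q 1 + apxCnt w 0 (Q + 1) (k - 1) := by
        intro Q
        rw [← apxCnt_add]; congr 1; omega
      rw [hsplit, hsplit]
      omega
  -- assemble the abelian power in w
  rw [hmdiv]
  refine ⟨he0, hk1, (fun j => (List.range k).map fun t => w (p + j * k + t)), ?_, ?_, ?_⟩
  · intro j _; simp
  · intro j hj a
    have hc0 : ∀ j' : ℕ, j' < e →
        ((List.range k).map fun t => w (p + j' * k + t)).count 0 = apxCnt w 0 p k := by
      intro j' hj'
      exact hD j' hj'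
    have hlenv : ∀ j' : ℕ, ((List.range k).map fun t => w (p + j' * k + t)).length = k := by
      intro j'; simp
    have h01j := apxCount01 ((List.range k).map fun t => w (p + j * k + t))
    have h010 := apxCount01 ((List.range k).map fun t => w (p + 0 * k + t))
    rw [hlenv j] at h01j
    rw [hlenv 0] at h010
    show (List.map (fun t => w (p + j * k + t)) (List.range k)).count a
        = (List.map (fun t => w (p + 0 * k + t)) (List.range k)).count a
    have ha : a = 0 ∨ a = 1 := by
      rcases a with ⟨av, hav⟩
      interval_cases av
      · left; rfl
      · right; rfl
    have hj0 := hc0 j hj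
    have h00 := hc0 0 he0
    rcases ha with rfl | rfl
    · rw [hj0, h00]
    · omega
  · refine ⟨p, ?_⟩
    have hlf : (((List.range e).map fun j =>
        (List.range k).map fun t => w (p + j * k + t)).flatten).length = e * k :=
      apxFlattenLen e k _ (fun j _ => by simp)
    rw [hlf, apxBlocks' w k e p]
end

section
/- Let k ≥ 1 and let u and v be words each of length at least 2k - 2 sharing a common prefix of length k - 1 and a common suffix of length k - 1. Then uv and vu are k-abelian equivalent. Consequently, for all words x and y, xuvy and xvuy are k-abelian equivalent. -/
/-- The number of (possibly overlapping) occurrences of `z` as a factor of `u`. -/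
def FactorCount {A : Type*} [DecidableEq A] (u z : List A) : ℕ :=
  (List.range (u.length + 1 - z.length)).countP fun i =>
    decide ((u.drop i).take z.length = z)

/-- `k`-abelian equivalence: every nonempty word of length at most `k` occurs
equally often as a factor of `u` and of `v`. -/
def KAbEq {A : Type*} [DecidableEq A] (k : ℕ) (u v : List A) : Prop :=
  ∀ z : List A, z ≠ [] → z.length ≤ k → FactorCount u z = FactorCount v z

/-!
Fix a nonempty `z` and put `m = |z| - 1`. Sorting the occurrences of `z` in `ab` by their
starting position gives `|ab|_z = |a|_z + |b|_z + |suff_m(a) pref_m(b)|_z`, because an occurrence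
meeting both `a` and `b` lies within `m` letters of the boundary. If `|u|, |v| ≥ m`, the count of
`z` in `xuvy` is therefore the sum of the counts in `x, u, v, y` and in the three boundary words,
which depend on `u` and `v` only through their prefixes and suffixes of length `m`. When `|z| ≤ k`
these agree for `u` and `v`, so swapping `u` and `v` merely permutes the terms.
-/

namespace List

variable {α : Type*}

lemma rtake_rtake_of_le (l : List α) {m n : ℕ} (h : m ≤ n) :
    (l.rtake n).rtake m = l.rtake m := by
  simp only [rtake, drop_drop, length_drop]
  congr 1
  omega

end List

namespace FactorCount

variable {A : Type*} [DecidableEq A]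

lemma eq_zero_of_length_lt {w z : List A} (h : w.length < z.length) : FactorCount w z = 0 := by
  simp [FactorCount, Nat.sub_eq_zero_of_le (by omega : w.length + 1 ≤ z.length)]

/-- Occurrences of `z` starting before position `n` all lie in `w.take (n + |z| - 1)`. -/
lemma eq_take_add_drop (w : List A) {z : List A} (hz : z ≠ []) (n : ℕ) :
    FactorCount w z = FactorCount (w.take (n + (z.length - 1))) z + FactorCount (w.drop n) z := by
  have hz1 : 1 ≤ z.length := List.length_pos_iff.mpr hz
  by_cases hn : w.length + 1 - z.length ≤ n
  · rw [List.take_of_length_le (by omega), eq_zero_of_length_lt (w := w.drop n) (by simp; omega),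
      Nat.add_zero]
  unfold FactorCount
  obtain ⟨r, hr⟩ : ∃ r, w.length + 1 - z.length = n + r :=
    ⟨_, (Nat.add_sub_of_le (by omega)).symm⟩
  have htake : (w.take (n + (z.length - 1))).length + 1 - z.length = n := by simp; omega
  have hdrop : (w.drop n).length + 1 - z.length = r := by simp; omega
  rw [hr, htake, hdrop, List.range_add, List.countP_append, List.countP_map]
  congr 1
  · refine List.countP_congr fun i hi => ?_
    rw [List.mem_range] at hi
    rw [List.drop_take, List.take_take, Nat.min_eq_left (by omega)]
  · refine List.countP_congr fun i _ => ?_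
    simp only [Function.comp_apply, List.drop_drop]

lemma append_eq_add_take (a b : List A) {z : List A} (hz : z ≠ []) :
    FactorCount (a ++ b) z = FactorCount (a ++ b.take (z.length - 1)) z + FactorCount b z := by
  rw [eq_take_add_drop (a ++ b) hz a.length, List.take_length_add_append, List.drop_left]

lemma append_eq_add_rtake (a b : List A) {z : List A} (hz : z ≠ []) :
    FactorCount (a ++ b) z = FactorCount a z + FactorCount (a.rtake (z.length - 1) ++ b) z := by
  have hz1 : 1 ≤ z.length := List.length_pos_iff.mpr hz
  rw [eq_take_add_drop (a ++ b) hz (a.length - (z.length - 1))]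
  by_cases ha : z.length - 1 ≤ a.length
  · rw [Nat.sub_add_cancel ha, List.take_left, List.drop_append_of_le_length (by omega)]
    rfl
  · rw [eq_zero_of_length_lt (w := a) (by omega),
      eq_zero_of_length_lt (by simp; omega), List.rtake, Nat.sub_eq_zero_of_le (by omega)]
    simp

/-- Occurrences of `z` in `a ++ b` straddling the boundary. -/
def crossing (a b z : List A) : ℕ :=
  FactorCount (a.rtake (z.length - 1) ++ b.take (z.length - 1)) z

lemma append (a b : List A) {z : List A} (hz : z ≠ []) :
    FactorCount (a ++ b) z = FactorCount a z + FactorCount b z + crossing a b z := by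
  rw [append_eq_add_rtake a b hz, append_eq_add_take _ b hz, crossing]
  ring

lemma crossing_append_left (x : List A) {u : List A} (v : List A) {z : List A}
    (hu : z.length - 1 ≤ u.length) : crossing (x ++ u) v z = crossing u v z := by
  rw [crossing, crossing, List.rtake, List.rtake, List.length_append, List.drop_append,
    List.drop_eq_nil_of_le (by omega), List.nil_append,
    show x.length + u.length - (z.length - 1) - x.length = u.length - (z.length - 1) by omega]

lemma append_append_append (x y : List A) {u v z : List A} (hz : z ≠ [])
    (hu : z.length - 1 ≤ u.length) (hv : z.length - 1 ≤ v.length) :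
    FactorCount (x ++ u ++ v ++ y) z =
      FactorCount x z + FactorCount u z + FactorCount v z + FactorCount y z +
        crossing x u z + crossing u v z + crossing v y z := by
  rw [append _ y hz, append _ v hz, append x u hz, crossing_append_left _ _ hv,
    crossing_append_left _ _ hu]
  ring

theorem swap (x y : List A) {u v z : List A} (hz : z ≠ [])
    (hu : z.length - 1 ≤ u.length) (hv : z.length - 1 ≤ v.length)
    (hpre : u.take (z.length - 1) = v.take (z.length - 1))
    (hsuf : u.rtake (z.length - 1) = v.rtake (z.length - 1)) :
    FactorCount (x ++ u ++ v ++ y) z = FactorCount (x ++ v ++ u ++ y) z := by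
  rw [append_append_append x y hz hu hv, append_append_append x y hz hv hu]
  simp only [crossing, hpre, hsuf]
  ring

end FactorCount

theorem kAbEq_swap_general {A : Type*} [DecidableEq A] (k : ℕ)
    (u v : List A) (hu : 2 * k - 2 ≤ u.length) (hv : 2 * k - 2 ≤ v.length)
    (hpre : u.take (k - 1) = v.take (k - 1))
    (hsuf : u.drop (u.length - (k - 1)) = v.drop (v.length - (k - 1))) :
    KAbEq k (u ++ v) (v ++ u) ∧
    ∀ x y : List A, KAbEq k (x ++ u ++ v ++ y) (x ++ v ++ u ++ y) := by
  have hswap (x y : List A) : KAbEq k (x ++ u ++ v ++ y) (x ++ v ++ u ++ y) := by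
    intro z hz hzk
    have hm : z.length - 1 ≤ k - 1 := by omega
    refine FactorCount.swap x y hz (by omega) (by omega) ?_ ?_
    · rw [← Nat.min_eq_left hm, ← List.take_take, hpre, List.take_take]
    · rw [← u.rtake_rtake_of_le hm, ← v.rtake_rtake_of_le hm]
      exact congrArg (List.rtake · (z.length - 1)) hsuf
  exact ⟨by simpa using hswap [] [], hswap⟩

/-- If `u` and `v` have length at least `2k - 2` and share a common prefix of
length `k - 1` and a common suffix of length `k - 1`, then `uv ~_k vu`;
consequently `xuvy ~_k xvuy` for all words `x` and `y`. -/
theorem kAbEq_swap {A : Type*} [DecidableEq A] (k : ℕ) (hk : 1 ≤ k)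
    (u v : List A) (hu : 2 * k - 2 ≤ u.length) (hv : 2 * k - 2 ≤ v.length)
    (hpre : u.take (k - 1) = v.take (k - 1))
    (hsuf : u.drop (u.length - (k - 1)) = v.drop (v.length - (k - 1))) :
    KAbEq k (u ++ v) (v ++ u) ∧
    ∀ x y : List A, KAbEq k (x ++ u ++ v ++ y) (x ++ v ++ u ++ y) :=
  kAbEq_swap_general k u v hu hv hpre hsuf
end

section
/- Let k ≥ 1 and let u, v be words of length at least k - 1. Then u ~_k v if and only if u and v have the same prefix of length k-1, the same suffix of length k-1, and |u|_z = |v|_z for every word z of length exactly k. -/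
/-!
Sorting the occurrences of `z` in `u` by the letter that precedes them gives
`|u|_z = ∑ₐ |u|_{az} + [z is a prefix of u]`. So once the factors of length `k` are counted
equally in `u` and `v`, the counts of the shorter factors agree, by descending length, exactly
when `u` and `v` have the same prefixes of length `< k`. The suffix condition is the prefix
condition for the reversed words.
-/

namespace List

variable {α : Type*}

theorem take_eq_take_iff_isPrefix_iff (u v : List α) (m : ℕ) :
    u.take m = v.take m ↔ ∀ z : List α, z.length ≤ m → (z <+: u ↔ z <+: v) := by
  constructor
  · intro h z hz
    have hu := prefix_take_iff (xs := z) (ys := u) (i := m)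
    have hv := prefix_take_iff (xs := z) (ys := v) (i := m)
    rw [h] at hu
    tauto
  · intro h
    have hle : ∀ {x y : List α}, (∀ z : List α, z.length ≤ m → (z <+: x → z <+: y)) →
        x.take m <+: y.take m := fun hxy =>
      prefix_take_iff.2 ⟨hxy _ (length_take_le _ _) (take_prefix _ _), length_take_le _ _⟩
    have huv := hle fun z hz => (h z hz).1
    exact huv.eq_of_length (huv.length_le.antisymm (hle fun z hz => (h z hz).2).length_le)

end List

section FactorCount

variable {A : Type*} [DecidableEq A]

theorem factorCount_nil (z : List A) : FactorCount [] z = if z = [] then 1 else 0 := by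
  cases z <;> simp [FactorCount]

theorem factorCount_cons (a : A) (u z : List A) :
    FactorCount (a :: u) z = FactorCount u z + if z <+: a :: u then 1 else 0 := by
  unfold FactorCount
  rcases le_or_gt z.length (u.length + 1) with hz | hz
  · rw [List.length_cons, show u.length + 1 + 1 - z.length = u.length + 1 - z.length + 1 by omega,
      List.range_succ_eq_map, List.countP_cons, List.countP_map]
    simp only [Function.comp_def, Nat.succ_eq_add_one, List.drop_succ_cons, List.drop_zero,
      decide_eq_true_eq, List.prefix_iff_eq_take, eq_comm (a := z)]
  · have hnot : ¬ z <+: a :: u := fun h => by simpa using h.length_le.trans_lt' hz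
    simp [hnot, show u.length + 1 + 1 - z.length = 0 by omega,
      show u.length + 1 - z.length = 0 by omega]

theorem factorCount_append_singleton (u : List A) (a : A) (z : List A) :
    FactorCount (u ++ [a]) z = FactorCount u z + if z <:+ u ++ [a] then 1 else 0 := by
  unfold FactorCount
  rcases le_or_gt z.length (u.length + 1) with hz | hz
  · rw [List.length_append, List.length_singleton,
      show u.length + 1 + 1 - z.length = u.length + 1 - z.length + 1 by omega,
      List.range_succ, List.countP_append]
    congr 1
    · refine List.countP_congr fun i hi => ?_
      rw [List.mem_range] at hi
      rw [List.drop_append_of_le_length (by omega),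
        List.take_append_of_le_length (by rw [List.length_drop]; omega)]
    · have hlen : (List.drop (u.length + 1 - z.length) (u ++ [a])).length ≤ z.length := by
        simp only [List.length_drop, List.length_append, List.length_singleton]; omega
      simp [List.suffix_iff_eq_drop (l₁ := z), List.take_of_length_le hlen, eq_comm (a := z)]
  · have hnot : ¬ z <:+ u ++ [a] := fun h => by simpa using h.length_le.trans_lt' hz
    simp [hnot, show u.length + 1 + 1 - z.length = 0 by omega,
      show u.length + 1 - z.length = 0 by omega]

theorem factorCount_reverse (u z : List A) :
    FactorCount u.reverse z.reverse = FactorCount u z := by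
  induction u with
  | nil => simp [factorCount_nil]
  | cons a u ih =>
    rw [List.reverse_cons, factorCount_append_singleton, ih, factorCount_cons,
      ← List.reverse_cons]
    simp only [List.reverse_suffix]

theorem factorCount_eq_sum_cons_add (u z : List A) (S : Finset A) (hS : ∀ a ∈ u, a ∈ S) :
    FactorCount u z = (∑ a ∈ S, FactorCount u (a :: z)) + if z <+: u then 1 else 0 := by
  induction u with
  | nil => simp [factorCount_nil]
  | cons b u ih =>
    rw [factorCount_cons, ih fun a ha => hS a (List.mem_cons_of_mem b ha)]
    simp only [factorCount_cons, Finset.sum_add_distrib, List.cons_prefix_cons, ite_and,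
      Finset.sum_ite_eq' S b, if_pos (hS b List.mem_cons_self)]

end FactorCount

namespace KAbEq

variable {A : Type*} [DecidableEq A] {k : ℕ} {u v : List A}

theorem reverse (h : KAbEq k u v) : KAbEq k u.reverse v.reverse := by
  intro z hz hzk
  rw [← z.reverse_reverse, factorCount_reverse, factorCount_reverse]
  exact h _ (by simpa using hz) (by simpa using hzk)

theorem isPrefix_iff (h : KAbEq k u v) {z : List A} (hz : z.length < k) :
    z <+: u ↔ z <+: v := by
  rcases eq_or_ne z [] with rfl | hne
  · simp
  set S := (u ++ v).toFinset
  have hu := factorCount_eq_sum_cons_add u z S fun a ha => by simp [S, ha]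
  have hv := factorCount_eq_sum_cons_add v z S fun a ha => by simp [S, ha]
  rw [h z hne hz.le, Finset.sum_congr rfl fun a _ => h (a :: z) (List.cons_ne_nil a z) hz] at hu
  by_cases hzu : z <+: u <;> by_cases hzv : z <+: v <;> simp_all

end KAbEq

theorem factorCount_eq_of_isPrefix_iff {A : Type*} [DecidableEq A] {k : ℕ} {u v : List A}
    (hpre : ∀ z : List A, z.length < k → (z <+: u ↔ z <+: v))
    (hcount : ∀ z : List A, z.length = k → FactorCount u z = FactorCount v z)
    (z : List A) (hz : z.length ≤ k) : FactorCount u z = FactorCount v z := by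
  set S := (u ++ v).toFinset
  obtain ⟨d, hd⟩ : ∃ d, z.length + d = k := ⟨k - z.length, by omega⟩
  induction d generalizing z with
  | zero => exact hcount z hd
  | succ d ih =>
    rw [factorCount_eq_sum_cons_add u z S fun a ha => by simp [S, ha],
      factorCount_eq_sum_cons_add v z S fun a ha => by simp [S, ha],
      Finset.sum_congr rfl fun a _ =>
        ih (a :: z) (by rw [List.length_cons]; omega) (by rw [List.length_cons]; omega)]
    simp only [hpre z (by omega)]

theorem kAbEq_iff_prefix_suffix_kcounts_general {A : Type*} [DecidableEq A] (k : ℕ) (hk : 1 ≤ k)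
    (u v : List A) :
    KAbEq k u v ↔
      u.take (k - 1) = v.take (k - 1) ∧
      u.drop (u.length - (k - 1)) = v.drop (v.length - (k - 1)) ∧
      ∀ z : List A, z.length = k → FactorCount u z = FactorCount v z := by
  constructor
  · intro h
    have hsuf : u.reverse.take (k - 1) = v.reverse.take (k - 1) :=
      (List.take_eq_take_iff_isPrefix_iff _ _ _).2 fun z hz => h.reverse.isPrefix_iff (by omega)
    refine ⟨(List.take_eq_take_iff_isPrefix_iff _ _ _).2 fun z hz => h.isPrefix_iff (by omega),
      by simpa [List.take_reverse] using hsuf,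
      fun z hz => h z (List.ne_nil_of_length_pos (by omega)) hz.le⟩
  · rintro ⟨hpre, -, hcount⟩ z - hz
    exact factorCount_eq_of_isPrefix_iff
      (fun z hz => (List.take_eq_take_iff_isPrefix_iff _ _ _).1 hpre z (by omega)) hcount z hz

/-- For words `u, v` of length at least `k - 1`: `u ~_k v` iff `u` and `v` have
the same prefix of length `k - 1`, the same suffix of length `k - 1`, and every
word of length exactly `k` occurs equally often as a factor of `u` and of `v`. -/
theorem kAbEq_iff_prefix_suffix_kcounts {A : Type*} [DecidableEq A] (k : ℕ) (hk : 1 ≤ k)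
    (u v : List A) (hu : k - 1 ≤ u.length) (hv : k - 1 ≤ v.length) :
    KAbEq k u v ↔
      u.take (k - 1) = v.take (k - 1) ∧
      u.drop (u.length - (k - 1)) = v.drop (v.length - (k - 1)) ∧
      ∀ z : List A, z.length = k → FactorCount u z = FactorCount v z :=
  kAbEq_iff_prefix_suffix_kcounts_general k hk u v
end
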